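/- arXiv:math/9402211 — 4 statements merged into one kernel-verified Lean document; each statement's English description precedes it below -/
import Mathlib

section
/- For a homogeneous element p supported on words of length n in the free monoid M_k, the left multiplication operator on ℓ²(M_k) given by convolution with p has operator norm equal to the ℓ² norm of p, i.e., sup{‖p * q‖₂ : q finitely supported, ‖q‖₂ ≤ 1} = ‖p‖₂. -/
/-!
If `p` is homogeneous of degree `n`, a word `x * y` with `x ∈ supp p` determines `x` as its
prefix of length `n`, so the products `x * y` over `supp p × supp q` are pairwise distinct and the
coefficients of `p * q` are exactly the products `p x * q y`. Hence `‖p * q‖₂ = ‖p‖₂ ‖q‖₂`,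
and `q = 1` attains the bound.
-/

/-- The ℓ² norm of a finitely supported function on the free monoid. -/
noncomputable def l2norm {k : ℕ} (p : MonoidAlgebra ℂ (FreeMonoid (Fin k))) : ℝ :=
  Real.sqrt (∑ x ∈ p.coeff.support, ‖p.coeff x‖ ^ 2)

namespace MonoidAlgebra

variable {R M : Type*} [NormedRing R] [NormMulClass R] [Mul M]

theorem sum_norm_sq_coeff_mul_of_injOn {p q : R[M]}
    (h : Set.InjOn (fun xy : M × M ↦ xy.1 * xy.2) (p.coeff.support ×ˢ q.coeff.support)) :
    ∑ z ∈ (p * q).coeff.support, ‖(p * q).coeff z‖ ^ 2 =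
      (∑ x ∈ p.coeff.support, ‖p.coeff x‖ ^ 2) * ∑ y ∈ q.coeff.support, ‖q.coeff y‖ ^ 2 := by
  classical
  have hcoeff : ∀ x ∈ p.coeff.support, ∀ y ∈ q.coeff.support,
      (p * q).coeff (x * y) = p.coeff x * q.coeff y := fun x hx y hy ↦
    coeff_mul_mul_of_uniqueMul fun a b ha hb hab ↦
      Prod.ext_iff.mp (@h (a, b) ⟨ha, hb⟩ (x, y) ⟨hx, hy⟩ hab)
  rw [Finset.sum_subset (support_coeff_mul_subset p q) fun z _ hz ↦ by
      simp [Finsupp.notMem_support_iff.mp hz],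
    Finset.mul_def, Finset.sum_image (by simpa only [Finset.coe_product] using h),
    Finset.sum_product, Finset.sum_mul_sum]
  refine Finset.sum_congr rfl fun x hx ↦ Finset.sum_congr rfl fun y hy ↦ ?_
  rw [hcoeff x hx y hy, norm_mul, mul_pow]

end MonoidAlgebra

theorem FreeMonoid.injOn_mul_of_length_eq {α : Type*} {n : ℕ} {S : Set (FreeMonoid α)}
    (hS : ∀ x ∈ S, x.length = n) (T : Set (FreeMonoid α)) :
    Set.InjOn (fun xy : FreeMonoid α × FreeMonoid α ↦ xy.1 * xy.2) (S ×ˢ T) := by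
  rintro ⟨x, y⟩ ⟨hx, -⟩ ⟨x', y'⟩ ⟨hx', -⟩ h
  obtain ⟨rfl, rfl⟩ := List.append_inj h ((hS x hx).trans (hS x' hx').symm)
  rfl

theorem l2norm_mul_of_length_eq {k n : ℕ} {p : MonoidAlgebra ℂ (FreeMonoid (Fin k))}
    (hp : ∀ x ∈ p.coeff.support, x.length = n) (q : MonoidAlgebra ℂ (FreeMonoid (Fin k))) :
    l2norm (p * q) = l2norm p * l2norm q := by
  rw [l2norm, l2norm, l2norm, ← Real.sqrt_mul (by positivity),
    MonoidAlgebra.sum_norm_sq_coeff_mul_of_injOn (FreeMonoid.injOn_mul_of_length_eq hp _)]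

theorem l2norm_one {k : ℕ} : l2norm (1 : MonoidAlgebra ℂ (FreeMonoid (Fin k))) = 1 := by
  simp [l2norm, MonoidAlgebra.one_def]

/-- For `p` homogeneous of degree `n` (supported on words of length `n`), the operator
norm of left convolution by `p` on `ℓ²(M_k)` equals `‖p‖₂`: the value `‖p‖₂` is the
greatest element of `{‖p * q‖₂ : q finitely supported, ‖q‖₂ ≤ 1}`. -/
theorem convolution_norm_of_homogeneous {k n : ℕ}
    (p : MonoidAlgebra ℂ (FreeMonoid (Fin k)))
    (hp : ∀ x ∈ p.coeff.support, x.length = n) :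
    IsGreatest {r : ℝ | ∃ q : MonoidAlgebra ℂ (FreeMonoid (Fin k)),
      l2norm q ≤ 1 ∧ r = l2norm (p * q)} (l2norm p) := by
  refine ⟨⟨1, l2norm_one.le, by rw [mul_one]⟩, ?_⟩
  rintro _ ⟨q, hq, rfl⟩
  rw [l2norm_mul_of_length_eq hp]
  exact mul_le_of_le_one_right (Real.sqrt_nonneg _) hq
end

section
/- For operators T₁, …, T_k and S₁, …, S_k on a Hilbert space, ‖Σᵢ Tᵢ Sᵢ‖ ≤ ‖Σᵢ Tᵢ Tᵢ*‖^{1/2} · ‖Σᵢ Sᵢ* Sᵢ‖^{1/2}. -/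
open ContinuousLinearMap

open scoped InnerProductSpace in
private lemma sum_norm_sq_le {H : Type*} [NormedAddCommGroup H]
    [InnerProductSpace ℂ H] [CompleteSpace H] {k : ℕ}
    (S : Fin k → H →L[ℂ] H) (ξ : H) :
    ∑ i, ‖S i ξ‖ ^ 2 ≤ ‖∑ i, adjoint (S i) * S i‖ * ‖ξ‖ ^ 2 := by
  have h1 : (∑ i, ‖S i ξ‖ ^ 2 : ℝ) = Complex.re ⟪(∑ i, adjoint (S i) * S i) ξ, ξ⟫_ℂ := by
    rw [ContinuousLinearMap.sum_apply, sum_inner]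
    simp only [Complex.re_sum]
    refine Finset.sum_congr rfl fun i _ => ?_
    rw [ContinuousLinearMap.mul_apply, adjoint_inner_left, ← @inner_self_eq_norm_sq ℂ]
    rfl
  rw [h1]
  calc Complex.re ⟪(∑ i, adjoint (S i) * S i) ξ, ξ⟫_ℂ
      ≤ ‖⟪(∑ i, adjoint (S i) * S i) ξ, ξ⟫_ℂ‖ := Complex.re_le_norm _
    _ ≤ ‖(∑ i, adjoint (S i) * S i) ξ‖ * ‖ξ‖ := norm_inner_le_norm _ _
    _ ≤ (‖∑ i, adjoint (S i) * S i‖ * ‖ξ‖) * ‖ξ‖ := by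
        gcongr; exact le_opNorm _ _
    _ = ‖∑ i, adjoint (S i) * S i‖ * ‖ξ‖ ^ 2 := by ring

/-- Cauchy–Schwarz type inequality for operators on a Hilbert space:
`‖Σᵢ Tᵢ Sᵢ‖ ≤ ‖Σᵢ Tᵢ Tᵢ*‖^{1/2} ‖Σᵢ Sᵢ* Sᵢ‖^{1/2}`. -/
theorem operator_cauchy_schwarz {H : Type*} [NormedAddCommGroup H]
    [InnerProductSpace ℂ H] [CompleteSpace H] {k : ℕ}
    (T S : Fin k → H →L[ℂ] H) :
    ‖∑ i, T i * S i‖ ≤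
      Real.sqrt ‖∑ i, T i * adjoint (T i)‖ * Real.sqrt ‖∑ i, adjoint (S i) * S i‖ := by
  open scoped InnerProductSpace in
  set K := Real.sqrt ‖∑ i, T i * adjoint (T i)‖ * Real.sqrt ‖∑ i, adjoint (S i) * S i‖ with hK
  have hKnn : 0 ≤ K := by positivity
  refine opNorm_le_bound _ hKnn fun ξ => ?_
  set A := ∑ i, T i * S i with hA
  -- key inner product bound
  have key : ∀ η : H, ‖⟪A ξ, η⟫_ℂ‖ ≤ K * ‖ξ‖ * ‖η‖ := by
    intro η
    have h1 : ⟪A ξ, η⟫_ℂ = ∑ i, ⟪S i ξ, adjoint (T i) η⟫_ℂ := by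
      rw [hA, ContinuousLinearMap.sum_apply, sum_inner]
      refine Finset.sum_congr rfl fun i _ => ?_
      rw [ContinuousLinearMap.mul_apply, adjoint_inner_right]
    calc ‖⟪A ξ, η⟫_ℂ‖ ≤ ∑ i, ‖⟪S i ξ, adjoint (T i) η⟫_ℂ‖ := by
          rw [h1]; exact norm_sum_le _ _
      _ ≤ ∑ i, ‖S i ξ‖ * ‖adjoint (T i) η‖ :=
          Finset.sum_le_sum fun i _ => norm_inner_le_norm _ _
      _ ≤ Real.sqrt (∑ i, ‖S i ξ‖ ^ 2) * Real.sqrt (∑ i, ‖adjoint (T i) η‖ ^ 2) :=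
          Real.sum_mul_le_sqrt_mul_sqrt _ _ _
      _ ≤ Real.sqrt (‖∑ i, adjoint (S i) * S i‖ * ‖ξ‖ ^ 2) *
            Real.sqrt (‖∑ i, T i * adjoint (T i)‖ * ‖η‖ ^ 2) := by
          gcongr
          · exact sum_norm_sq_le S ξ
          · have := sum_norm_sq_le (fun i => adjoint (T i)) η
            simpa [adjoint_adjoint] using this
      _ = K * ‖ξ‖ * ‖η‖ := by
          rw [Real.sqrt_mul (norm_nonneg _), Real.sqrt_mul (norm_nonneg _),
            Real.sqrt_sq (norm_nonneg _), Real.sqrt_sq (norm_nonneg _), hK]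
          ring
  -- take η = A ξ
  have h2 := key (A ξ)
  have h3 : ‖⟪A ξ, A ξ⟫_ℂ‖ = ‖A ξ‖ ^ 2 := by
    rw [@inner_self_eq_norm_sq_to_K ℂ]
    simp [Complex.norm_natCast]
  rw [h3] at h2
  rcases eq_or_lt_of_le (norm_nonneg (A ξ)) with h | h
  · rw [← h]; positivity
  · nlinarith
end

section
/- Let M₂ be the free monoid on a, b, P_α the submonoid generated by {aⁿb : n ≥ 1}, and E the set of words in M₂ having no nonempty initial segment in P_α. Then every word z ∈ M₂ factors uniquely as z = w y with w ∈ P_α and y ∈ E. -/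
/-- The submonoid `P_α` of the free monoid on `a, b` generated by the words `aⁿb`,
`n ≥ 1`. -/
def Palpha : Submonoid (FreeMonoid (Fin 2)) :=
  Submonoid.closure {w | ∃ n : ℕ, 1 ≤ n ∧ w = (FreeMonoid.of 0) ^ n * FreeMonoid.of 1}

open FreeMonoid List

/-- Words that are concatenations of blocks `aⁿb`. -/
inductive InP : List (Fin 2) → Prop
  | nil : InP []
  | cons (n : ℕ) (hn : 1 ≤ n) (l : List (Fin 2)) (hl : InP l) :
      InP (List.replicate n 0 ++ 1 :: l)

lemma InP.append {l m : List (Fin 2)} (hl : InP l) (hm : InP m) : InP (l ++ m) := by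
  induction hl with
  | nil => simpa
  | cons n hn l' hl' ih =>
      rw [List.append_assoc, List.cons_append]
      exact InP.cons n hn _ ih

lemma toList_pow_of (n : ℕ) : toList ((FreeMonoid.of (0 : Fin 2)) ^ n) = List.replicate n 0 := by
  induction n with
  | zero => rfl
  | succ k ih => rw [pow_succ, toList_mul, ih, toList_of, List.replicate_succ']

lemma ofList_mem_Palpha {l : List (Fin 2)} (h : InP l) : ofList l ∈ Palpha := by
  induction h with
  | nil => exact Palpha.one_mem
  | cons n hn l' hl' ih =>
      have he : ofList (List.replicate n 0 ++ 1 :: l')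
          = ofList (List.replicate n 0 ++ [1]) * ofList l' := by
        apply toList.injective
        simp [toList_mul]
      rw [he]
      refine mul_mem (Submonoid.subset_closure ⟨n, hn, ?_⟩) ih
      apply toList.injective
      rw [toList_mul, toList_pow_of, toList_of, toList_ofList]
  
lemma mem_Palpha_iff (z : FreeMonoid (Fin 2)) : z ∈ Palpha ↔ InP (toList z) := by
  constructor
  · intro hz
    induction hz using Submonoid.closure_induction with
    | mem x hx =>
        obtain ⟨n, hn, rfl⟩ := hx
        have : toList ((FreeMonoid.of (0:Fin 2)) ^ n * FreeMonoid.of 1)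
            = List.replicate n 0 ++ 1 :: [] := by
          rw [toList_mul, toList_pow_of, toList_of]
        rw [this]
        exact InP.cons n hn [] InP.nil
    | one => exact InP.nil
    | mul x y _ _ hx hy => rw [toList_mul]; exact hx.append hy
  · intro h
    have := ofList_mem_Palpha h
    rwa [ofList_toList] at this

lemma block_eq : ∀ (n m : ℕ) (x y : List (Fin 2)),
    List.replicate n 0 ++ 1 :: x = List.replicate m 0 ++ 1 :: y → n = m ∧ x = y := by
  intro n
  induction n with
  | zero =>
      intro m x y h
      cases m with
      | zero => simpa using h
      | succ k => simp [List.replicate_succ] at h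
  | succ k ih =>
      intro m x y h
      cases m with
      | zero => simp [List.replicate_succ] at h
      | succ j =>
          simp only [List.replicate_succ, List.cons_append, List.cons.injEq] at h
          obtain ⟨h1, h2⟩ := ih j x y h.2
          exact ⟨by omega, h2⟩

lemma InP.tail {w : List (Fin 2)} (h : InP w) :
    ∀ n x, w = List.replicate n 0 ++ 1 :: x → InP x := by
  cases h with
  | nil => intro n x hx; simp at hx
  | cons m hm l hl =>
      intro n x hx
      obtain ⟨rfl, rfl⟩ := block_eq m n l x hx
      exact hl

lemma InP.left_unitary {u v : List (Fin 2)} (hu : InP u) (huv : InP (u ++ v)) : InP v := by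
  induction hu generalizing v with
  | nil => simpa using huv
  | cons n hn l hl ih =>
      rw [List.append_assoc, List.cons_append] at huv
      exact ih (huv.tail n (l ++ v) rfl)

lemma exists_fact (N : ℕ) : ∀ z : FreeMonoid (Fin 2), (toList z).length ≤ N →
    ∃ w y : FreeMonoid (Fin 2), w ∈ Palpha ∧
      (∀ u v : FreeMonoid (Fin 2), y = u * v → u ∈ Palpha → u = 1) ∧ z = w * y := by
  induction N with
  | zero =>
      intro z hz
      have hz' : z = 1 := toList.injective (List.length_eq_zero_iff.mp (Nat.le_zero.mp hz))
      subst hz'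
      refine ⟨1, 1, Palpha.one_mem, ?_, (one_mul 1).symm⟩
      intro u v huv _
      have : toList u ++ toList v = ([] : List (Fin 2)) := (toList_mul u v ▸ congrArg toList huv).symm
      exact toList.injective (List.append_eq_nil_iff.mp this).1
  | succ k ih =>
      intro z hz
      by_cases h : ∃ u v : FreeMonoid (Fin 2), u ≠ 1 ∧ u ∈ Palpha ∧ z = u * v
      · obtain ⟨u, v, hu1, huP, rfl⟩ := h
        have hlu : 1 ≤ (toList u).length := by
          rcases Nat.eq_zero_or_pos (toList u).length with h0 | h0
          · exact absurd (toList.injective (List.length_eq_zero_iff.mp h0)) hu1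
          · exact h0
        have hv : (toList v).length ≤ k := by
          rw [toList_mul, List.length_append] at hz; omega
        obtain ⟨w, y, hwP, hy, rfl⟩ := ih v hv
        exact ⟨u * w, y, mul_mem huP hwP, hy, (mul_assoc u w y).symm⟩
      · push_neg at h
        refine ⟨1, z, Palpha.one_mem, ?_, (one_mul z).symm⟩
        intro u v huv huP
        by_contra hu1
        exact h u v hu1 huP huv

/-- Every word `z` in the free monoid on `a, b` factors uniquely as `z = w * y` with
`w ∈ P_α` and `y` having no nonempty initial segment in `P_α`. -/
theorem unique_factorization_over_Palpha (z : FreeMonoid (Fin 2)) :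
    ∃! wy : FreeMonoid (Fin 2) × FreeMonoid (Fin 2),
      wy.1 ∈ Palpha ∧
      (∀ u v : FreeMonoid (Fin 2), wy.2 = u * v → u ∈ Palpha → u = 1) ∧
      z = wy.1 * wy.2 := by
  obtain ⟨w, y, hw, hy, hz⟩ := exists_fact (toList z).length z le_rfl
  refine ⟨(w, y), ⟨hw, hy, hz⟩, ?_⟩
  -- uniqueness
  rintro ⟨w', y'⟩ ⟨hw', hy', hz'⟩
  -- w' ++ y' = w ++ y
  have key : ∀ (w1 y1 w2 y2 : FreeMonoid (Fin 2)), w1 ∈ Palpha → w2 ∈ Palpha →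
      (∀ u v : FreeMonoid (Fin 2), y1 = u * v → u ∈ Palpha → u = 1) →
      w1 * y1 = w2 * y2 →
      ∃ t : List (Fin 2), toList w2 = toList w1 ++ t ∧ toList y1 = t ++ toList y2 → True := by
    intro _ _ _ _ _ _ _ _; exact ⟨[], fun _ => trivial⟩
  clear key
  have heq : toList w' ++ toList y' = toList w ++ toList y := by
    have := hz'.symm.trans hz
    rw [← toList_mul, ← toList_mul]
    exact congrArg toList this
  rcases List.append_eq_append_iff.mp heq with ⟨t, hw2, hy2⟩ | ⟨t, hw2, hy2⟩
  · -- toList w = toList w' ++ t, toList y' = t ++ toList y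
    have htP : InP t := InP.left_unitary ((mem_Palpha_iff w').mp hw')
      (by rw [← hw2]; exact (mem_Palpha_iff w).mp hw)
    have hy'eq : y' = ofList t * y := toList.injective (by rw [toList_mul, toList_ofList]; exact hy2)
    have ht1 : ofList t = 1 := hy' (ofList t) y hy'eq (ofList_mem_Palpha htP)
    have ht : t = [] := by simpa using congrArg toList ht1
    subst ht
    have hww : w' = w := toList.injective (by simpa using hw2.symm)
    have hyy : y' = y := by simpa using hy'eq
    simp [hww, hyy]
  · -- toList w' = toList w ++ t, toList y = t ++ toList y'
    have htP : InP t := InP.left_unitary ((mem_Palpha_iff w).mp hw)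
      (by rw [← hw2]; exact (mem_Palpha_iff w').mp hw')
    have hyeq : y = ofList t * y' := toList.injective (by rw [toList_mul, toList_ofList]; exact hy2)
    have ht1 : ofList t = 1 := hy (ofList t) y' hyeq (ofList_mem_Palpha htP)
    have ht : t = [] := by simpa using congrArg toList ht1
    subst ht
    have hww : w' = w := toList.injective (by simpa using hw2)
    have hyy : y' = y := toList.injective (by simpa using hy2.symm)
    simp [hww, hyy]
end

section
/- Let X and Y be Banach spaces such that X is isomorphic to a complemented subspace of Y, Y is isomorphic to a complemented subspace of X, X ≅ X ⊕ X, and Y ≅ Y ⊕ Y. Then X is isomorphic to Y (Pełczyński decomposition method). -/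
/-!
If `Y ≃ X × Z` and `X ≃ X × X`, then `Y ≃ X × Z ≃ X × X × Z ≃ X × Y`; symmetrically `X ≃ Y × X`,
so `X ≃ Y × X ≃ X × Y ≃ Y`.
-/

section Complemented

variable {R M N : Type*} [Ring R]
  [TopologicalSpace M] [AddCommGroup M] [Module R M]
  [TopologicalSpace N] [AddCommGroup N] [Module R N] [IsTopologicalAddGroup N]

theorem ContinuousLinearEquiv.nonempty_equiv_prod_of_comp_eq_id_of_prod_self
    (f : M →L[R] N) (g : N →L[R] M) (hgf : g.comp f = ContinuousLinearMap.id R M)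
    (hM : Nonempty ((M × M) ≃L[R] M)) : Nonempty (N ≃L[R] M × N) := by
  obtain ⟨eM⟩ := hM
  have hfg : Function.RightInverse f g := fun x => congrArg (· x) hgf
  let e : N ≃L[R] M × g.ker := equivOfRightInverse g f hfg
  exact ⟨e.trans <| (eM.symm.prodCongr (.refl R _)).trans <|
    (prodAssoc R M M _).trans ((ContinuousLinearEquiv.refl R M).prodCongr e.symm)⟩

end Complemented

theorem pelczynski_decomposition_general
    {X Y : Type*} [NormedAddCommGroup X] [NormedSpace ℝ X]
    [NormedAddCommGroup Y] [NormedSpace ℝ Y]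
    (f : X →L[ℝ] Y) (g : Y →L[ℝ] X) (hgf : g.comp f = ContinuousLinearMap.id ℝ X)
    (f' : Y →L[ℝ] X) (g' : X →L[ℝ] Y) (hgf' : g'.comp f' = ContinuousLinearMap.id ℝ Y)
    (hX : Nonempty ((X × X) ≃L[ℝ] X)) (hY : Nonempty ((Y × Y) ≃L[ℝ] Y)) :
    Nonempty (X ≃L[ℝ] Y) := by
  obtain ⟨eY⟩ := ContinuousLinearEquiv.nonempty_equiv_prod_of_comp_eq_id_of_prod_self f g hgf hX
  obtain ⟨eX⟩ :=
    ContinuousLinearEquiv.nonempty_equiv_prod_of_comp_eq_id_of_prod_self f' g' hgf' hY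
  exact ⟨eX.trans ((ContinuousLinearEquiv.prodComm ℝ Y X).trans eY.symm)⟩

/-- Pełczyński decomposition method: if `X` is isomorphic to a complemented subspace of
`Y` (witnessed by bounded maps `f : X → Y`, `g : Y → X` with `g ∘ f = id`), `Y` is
isomorphic to a complemented subspace of `X`, `X ≅ X ⊕ X` and `Y ≅ Y ⊕ Y`, then the
Banach spaces `X` and `Y` are isomorphic. -/
theorem pelczynski_decomposition
    {X Y : Type*} [NormedAddCommGroup X] [NormedSpace ℝ X] [CompleteSpace X]
    [NormedAddCommGroup Y] [NormedSpace ℝ Y] [CompleteSpace Y]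
    (f : X →L[ℝ] Y) (g : Y →L[ℝ] X) (hgf : g.comp f = ContinuousLinearMap.id ℝ X)
    (f' : Y →L[ℝ] X) (g' : X →L[ℝ] Y) (hgf' : g'.comp f' = ContinuousLinearMap.id ℝ Y)
    (hX : Nonempty ((X × X) ≃L[ℝ] X)) (hY : Nonempty ((Y × Y) ≃L[ℝ] Y)) :
    Nonempty (X ≃L[ℝ] Y) :=
  pelczynski_decomposition_general f g hgf f' g' hgf' hX hY
end
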